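/- arXiv:2411.12754 — 11 statements merged into one kernel-verified Lean document; each statement's English description precedes it below -/
import Mathlib

section
/- With h defined from binary digits by h(k) = Σ_{i≥1} β_i 2^{⌊(i−1)/2⌋}, if k and ℓ are natural numbers not both odd, then h(k+ℓ) ≤ h(k) + h(ℓ). -/
/-!
Since `k` and `ℓ` are not both odd, `(k + ℓ) / 2 = k / 2 + ℓ / 2`, and `h k` is the sum of the
binary digits of `k / 2` weighted by `w i = 2 ^ ⌊i / 2⌋`. Any digit sum whose weights satisfy
`w (i + 1) ≤ 2 * w i` is subadditive: in the schoolbook addition every carry replaces two digits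
of weight `w i` by one digit of weight `w (i + 1)`.
-/

/-- `h k = Σ_{i≥1} β_i 2^{⌊(i−1)/2⌋}` where `β_i` are the binary digits of `k`. -/
def h (k : ℕ) : ℕ := ∑ i ∈ Finset.Icc 1 k, if k.testBit i then 2 ^ ((i - 1) / 2) else 0

def bitSum (w : ℕ → ℕ) (a : ℕ) : ℕ :=
  if a = 0 then 0 else a % 2 * w 0 + bitSum (fun i => w (i + 1)) (a / 2)
termination_by a
decreasing_by exact Nat.div_lt_self (Nat.pos_of_ne_zero ‹_›) one_lt_two

@[simp]
lemma bitSum_zero (w : ℕ → ℕ) : bitSum w 0 = 0 := by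
  rw [bitSum, if_pos rfl]

lemma bitSum_eq (w : ℕ → ℕ) (a : ℕ) :
    bitSum w a = a % 2 * w 0 + bitSum (fun i => w (i + 1)) (a / 2) := by
  rcases eq_or_ne a 0 with rfl | ha
  · simp
  · rw [bitSum, if_neg ha]

lemma bitSum_one (w : ℕ → ℕ) : bitSum w 1 = w 0 := by
  simp [bitSum_eq w 1]

lemma bitSum_eq_sum_range (w : ℕ → ℕ) {a N : ℕ} (ha : a < 2 ^ N) :
    bitSum w a = ∑ i ∈ Finset.range N, if a.testBit i then w i else 0 := by
  induction N generalizing w a with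
  | zero => simp [Nat.lt_one_iff.mp ha]
  | succ N ih =>
    have ha' : a / 2 < 2 ^ N := by rw [pow_succ] at ha; omega
    rw [bitSum_eq, ih _ ha', Finset.sum_range_succ', add_comm]
    simp only [Nat.testBit_add_one, Nat.testBit_zero]
    congr 1
    rcases Nat.mod_two_eq_zero_or_one a with h | h <;> simp [h]

lemma bitSum_add_add_le {w : ℕ → ℕ} (hw : ∀ i, w (i + 1) ≤ 2 * w i) {N a b c : ℕ}
    (ha : a < 2 ^ N) (hb : b < 2 ^ N) (hc : c ≤ 1) :
    bitSum w (a + b + c) ≤ bitSum w a + bitSum w b + c * w 0 := by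
  induction N generalizing w a b c with
  | zero =>
    obtain ⟨rfl, rfl⟩ : a = 0 ∧ b = 0 := by omega
    interval_cases c <;> simp [bitSum_one]
  | succ N ih =>
    rw [pow_succ] at ha hb
    set carry := (a % 2 + b % 2 + c) / 2
    have hsum : (a + b + c) / 2 = a / 2 + b / 2 + carry := by omega
    have hrec := ih (w := fun i => w (i + 1)) (fun i => hw (i + 1)) (a := a / 2) (b := b / 2)
      (c := carry) (by omega) (by omega) (by omega)
    have hcarry : carry * w 1 ≤ carry * (2 * w 0) := Nat.mul_le_mul_left _ (hw 0)
    have hdigit : ((a + b + c) % 2 + 2 * carry) * w 0 = (a % 2 + b % 2 + c) * w 0 := by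
      congr 1; omega
    rw [bitSum_eq w (a + b + c), bitSum_eq w a, bitSum_eq w b, hsum]
    linarith

lemma bitSum_add_le {w : ℕ → ℕ} (hw : ∀ i, w (i + 1) ≤ 2 * w i) (a b : ℕ) :
    bitSum w (a + b) ≤ bitSum w a + bitSum w b := by
  simpa using bitSum_add_add_le hw (N := a + b) (c := 0)
    (Nat.lt_two_pow_self.trans_le (Nat.pow_le_pow_right two_pos (Nat.le_add_right a b)))
    (Nat.lt_two_pow_self.trans_le (Nat.pow_le_pow_right two_pos (Nat.le_add_left b a)))
    zero_le_one

lemma h_eq_bitSum (k : ℕ) : h k = bitSum (fun i => 2 ^ (i / 2)) (k / 2) := by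
  rw [bitSum_eq_sum_range _ ((Nat.div_le_self k 2).trans_lt Nat.lt_two_pow_self), h,
    ← Finset.Ico_add_one_right_eq_Icc, Finset.sum_Ico_eq_sum_range, Nat.add_sub_cancel]
  refine Finset.sum_congr rfl fun i _ => ?_
  rw [add_comm 1 i, Nat.testBit_add_one, Nat.add_sub_cancel]

theorem h_add_le (k l : ℕ) (hkl : ¬ (Odd k ∧ Odd l)) :
    h (k + l) ≤ h k + h l := by
  have hw : ∀ i, 2 ^ ((i + 1) / 2) ≤ 2 * 2 ^ (i / 2) := fun i => by
    rw [← pow_succ']; exact Nat.pow_le_pow_right two_pos (by omega)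
  have hhalf : (k + l) / 2 = k / 2 + l / 2 := by
    rw [Nat.odd_iff, Nat.odd_iff] at hkl; omega
  rw [h_eq_bitSum, h_eq_bitSum, h_eq_bitSum, hhalf]
  exact bitSum_add_le hw _ _
end

section
/- With h defined from binary digits by h(k) = Σ_{i≥1} β_i 2^{⌊(i−1)/2⌋}, if k and ℓ are both odd natural numbers, then h(k+ℓ) ≤ h(k) + h(ℓ) + 1. -/
/-!
Discarding the unweighted bit `β₀` gives `h k = pairedBitSum (k / 2)`, where
`pairedBitSum m = Σ_{i ≥ 0} β_i(m) 2^{⌊i/2⌋}` scores each base-4 digit `d` of `m` at position `j`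
as `⌈d/2⌉ · 2^j`. The digit score is subadditive, and adding `1` raises `pairedBitSum` by at most
`1`, so a carry out of position `j` costs at most `2^(j+1)`, which the two digits producing it
always pay for; hence `pairedBitSum` is subadditive. For odd `k` and `l`,
`(k + l) / 2 = k / 2 + l / 2 + 1`, and the extra `1` costs at most `1`.
-/

def pairedBitSum (m : ℕ) : ℕ :=
  if m = 0 then 0 else (m % 4 + 1) / 2 + 2 * pairedBitSum (m / 4)

@[simp]
theorem pairedBitSum_zero : pairedBitSum 0 = 0 := by
  rw [pairedBitSum]
  simp

theorem pairedBitSum_four_mul_add (a r : ℕ) (hr : r < 4) :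
    pairedBitSum (4 * a + r) = (r + 1) / 2 + 2 * pairedBitSum a := by
  rw [pairedBitSum]
  split_ifs with h0
  · obtain ⟨rfl, rfl⟩ : a = 0 ∧ r = 0 := by omega
    simp
  · congr 3 <;> omega

theorem pairedBitSum_eq (m : ℕ) : pairedBitSum m = (m % 4 + 1) / 2 + 2 * pairedBitSum (m / 4) := by
  conv_lhs => rw [← Nat.div_add_mod m 4]
  exact pairedBitSum_four_mul_add _ _ (Nat.mod_lt m (by norm_num))

theorem pairedBitSum_succ_le (m : ℕ) : pairedBitSum (m + 1) ≤ pairedBitSum m + 1 := by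
  induction m using Nat.strong_induction_on with
  | _ m ih =>
    obtain ⟨a, r, hr, rfl⟩ : ∃ a r, r < 4 ∧ m = 4 * a + r := ⟨m / 4, m % 4, by omega, by omega⟩
    rw [pairedBitSum_four_mul_add a r hr]
    rcases Nat.lt_or_ge r 3 with hr3 | hr3
    · rw [add_assoc, pairedBitSum_four_mul_add a (r + 1) (by omega)]
      omega
    · rw [show 4 * a + r + 1 = 4 * (a + 1) + 0 by omega, pairedBitSum_four_mul_add _ _ (by norm_num)]
      have := ih a (by omega)
      omega

theorem pairedBitSum_add_le (m n : ℕ) : pairedBitSum (m + n) ≤ pairedBitSum m + pairedBitSum n := by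
  induction m using Nat.strong_induction_on generalizing n with
  | _ m ih =>
    rcases Nat.eq_zero_or_pos m with rfl | hm
    · simp
    obtain ⟨a, r, hr, rfl⟩ : ∃ a r, r < 4 ∧ m = 4 * a + r := ⟨m / 4, m % 4, by omega, by omega⟩
    obtain ⟨b, s, hs, rfl⟩ : ∃ b s, s < 4 ∧ n = 4 * b + s := ⟨n / 4, n % 4, by omega, by omega⟩
    have hab := ih a (by omega) b
    rw [pairedBitSum_four_mul_add a r hr, pairedBitSum_four_mul_add b s hs]
    rcases Nat.lt_or_ge (r + s) 4 with hrs | hrs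
    · rw [show 4 * a + r + (4 * b + s) = 4 * (a + b) + (r + s) by ring,
        pairedBitSum_four_mul_add _ _ hrs]
      omega
    · rw [show 4 * a + r + (4 * b + s) = 4 * (a + b + 1) + (r + s - 4) by omega,
        pairedBitSum_four_mul_add _ _ (by omega)]
      have := pairedBitSum_succ_le (a + b)
      omega

theorem pairedBitSum_eq_sum_range (n m : ℕ) (hm : m < 4 ^ n) :
    pairedBitSum m = ∑ i ∈ Finset.range (2 * n), if m.testBit i then 2 ^ (i / 2) else 0 := by
  induction n generalizing m with
  | zero =>
    obtain rfl : m = 0 := by simpa using hm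
    simp
  | succ n ih =>
    have hquot : m / 4 < 4 ^ n := by rw [pow_succ] at hm; omega
    have hhigh : ∑ i ∈ Finset.range (2 * n), (if m.testBit (i + 2) then 2 ^ ((i + 2) / 2) else 0)
        = 2 * pairedBitSum (m / 4) := by
      rw [ih _ hquot, Finset.mul_sum]
      refine Finset.sum_congr rfl fun i _ => ?_
      rw [show m / 4 = m / 2 / 2 by omega, Nat.testBit_div_two, Nat.testBit_div_two,
        show (i + 2) / 2 = i / 2 + 1 by omega, pow_succ]
      split_ifs <;> ring
    have hlow : (if m.testBit 1 then 2 ^ (1 / 2) else 0) + (if m.testBit 0 then 2 ^ (0 / 2) else 0)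
        = (m % 4 + 1) / 2 := by
      rw [← Nat.testBit_div_two, Nat.testBit_zero, Nat.testBit_zero]
      split_ifs <;> simp_all <;> omega
    rw [show 2 * (n + 1) = 2 * n + 1 + 1 by ring, Finset.sum_range_succ', Finset.sum_range_succ',
      hhigh, add_assoc, hlow, pairedBitSum_eq m]
    ring

theorem h_eq_pairedBitSum_div_two (k : ℕ) : h k = pairedBitSum (k / 2) := by
  have hk : k / 2 < 2 ^ k := (Nat.div_le_self k 2).trans_lt Nat.lt_two_pow_self
  rw [pairedBitSum_eq_sum_range k _ (hk.trans_le (Nat.pow_le_pow_left (by norm_num) k)), h,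
    ← Finset.Ico_add_one_right_eq_Icc, Finset.sum_Ico_eq_sum_range, Nat.add_sub_cancel]
  refine Finset.sum_subset_zero_on_sdiff (Finset.range_subset_range.2 (by omega)) ?_ ?_
  · intro i hi
    simp only [Finset.mem_sdiff, Finset.mem_range, not_lt] at hi
    simp [Nat.testBit_lt_two_pow (hk.trans_le (Nat.pow_le_pow_right (by norm_num) hi.2))]
  · intro i _
    rw [Nat.add_comm 1 i, ← Nat.testBit_div_two, Nat.add_sub_cancel]

theorem h_add_le_of_odd (k l : ℕ) (hk : Odd k) (hl : Odd l) :
    h (k + l) ≤ h k + h l + 1 := by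
  obtain ⟨a, rfl⟩ := hk
  obtain ⟨b, rfl⟩ := hl
  have hsum : (2 * a + 1 + (2 * b + 1)) / 2 = a + b + 1 := by omega
  have hk : (2 * a + 1) / 2 = a := by omega
  have hl : (2 * b + 1) / 2 = b := by omega
  rw [h_eq_pairedBitSum_div_two, h_eq_pairedBitSum_div_two, h_eq_pairedBitSum_div_two, hsum, hk, hl]
  calc pairedBitSum (a + b + 1) ≤ pairedBitSum (a + b) + 1 := pairedBitSum_succ_le (a + b)
    _ ≤ pairedBitSum a + pairedBitSum b + 1 := by gcongr; exact pairedBitSum_add_le a b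
end

section
/- With h defined from binary digits by h(k) = Σ_{i≥1} β_i 2^{⌊(i−1)/2⌋}: if k and ℓ are odd and h(k+ℓ) = h(k) + h(ℓ) + 1, then k ≡ ℓ ≡ 1 (mod 4). -/
/-!
Dropping the unused bit `β_0` gives `h k = pairWeight (k / 2)`, where `pairWeight n` reads `n` in
base 4 and weighs the `i`-th digit `d` by its binary digit sum `⌈d/2⌉` at place value `2^i`.
Adding digit by digit with an incoming carry `c ≤ 1` shows
`pairWeight (a + b + c) ≤ pairWeight a + pairWeight b + c`: a carry out of a digit is worth `2`
one place higher, and it lowers the digit weights by at least `2`.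
For odd `k`, `l` we have `(k + l) / 2 = k / 2 + l / 2 + 1`, and equality in the carry inequality
already fails at the lowest digit unless both `k / 2` and `l / 2` are even.
-/

open Finset

def pairWeight (n : ℕ) : ℕ :=
  if n = 0 then 0 else n % 2 + n / 2 % 2 + 2 * pairWeight (n / 4)
decreasing_by omega

theorem pairWeight_eq (n : ℕ) : pairWeight n = n % 2 + n / 2 % 2 + 2 * pairWeight (n / 4) := by
  rw [pairWeight]
  split_ifs with hn
  · simp [hn, pairWeight]
  · rfl

theorem pairWeight_add_add_le (a b c : ℕ) (hc : c ≤ 1) :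
    pairWeight (a + b + c) ≤ pairWeight a + pairWeight b + c := by
  by_cases hab : a + b = 0
  · obtain ⟨rfl, rfl⟩ : a = 0 ∧ b = 0 := by omega
    interval_cases c <;> simp [pairWeight]
  · have carry := pairWeight_add_add_le (a / 4) (b / 4) ((a % 4 + b % 4 + c) / 4) (by omega)
    have hdiv : (a + b + c) / 4 = a / 4 + b / 4 + (a % 4 + b % 4 + c) / 4 := by omega
    rw [pairWeight_eq (a + b + c), pairWeight_eq a, pairWeight_eq b, hdiv]
    omega
termination_by a + b

theorem even_of_pairWeight_add_add_one {a b : ℕ}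
    (heq : pairWeight (a + b + 1) = pairWeight a + pairWeight b + 1) : Even a ∧ Even b := by
  have carry := pairWeight_add_add_le (a / 4) (b / 4) ((a % 4 + b % 4 + 1) / 4) (by omega)
  have hdiv : (a + b + 1) / 4 = a / 4 + b / 4 + (a % 4 + b % 4 + 1) / 4 := by omega
  rw [pairWeight_eq (a + b + 1), pairWeight_eq a, pairWeight_eq b, hdiv] at heq
  simp only [Nat.even_iff]
  omega

theorem ite_testBit_zero (n : ℕ) : (if n.testBit 0 then 1 else 0) = n % 2 := by
  rcases Nat.mod_two_eq_zero_or_one n with hn | hn <;> simp [Nat.testBit_zero, hn]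

theorem sum_range_testBit_eq_of_lt (f : ℕ → ℕ) {n M N : ℕ} (hn : n < 2 ^ M) (hMN : M ≤ N) :
    ∑ i ∈ range N, (if n.testBit i then f i else 0) =
      ∑ i ∈ range M, (if n.testBit i then f i else 0) := by
  refine (sum_subset (range_subset_range.mpr hMN) fun i _ hiM => ?_).symm
  rw [Nat.testBit_eq_false_of_lt (hn.trans_le (Nat.pow_le_pow_right two_pos (by simpa using hiM)))]
  rfl

theorem pairWeight_eq_sum (N : ℕ) {n : ℕ} (hn : n < 4 ^ N) :
    pairWeight n = ∑ i ∈ range (2 * N), if n.testBit i then 2 ^ (i / 2) else 0 := by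
  induction N generalizing n with
  | zero => simp_all [pairWeight]
  | succ N ih =>
    have high : ∀ i, (if n.testBit (i + 2) then 2 ^ ((i + 2) / 2) else 0) =
        2 * (if (n / 4).testBit i then 2 ^ (i / 2) else 0) := by
      intro i
      rw [show n / 4 = n / 2 / 2 by omega, Nat.testBit_div_two, Nat.testBit_div_two,
        Nat.add_div_right _ two_pos, pow_succ]
      split_ifs <;> ring
    rw [show 2 * (N + 1) = 2 * N + 2 by ring, sum_range_succ', sum_range_succ', sum_congr rfl
      fun i _ => high i, ← mul_sum, ← ih (by rw [pow_succ] at hn; omega), pairWeight_eq n,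
      ← Nat.testBit_div_two]
    simp only [Nat.zero_add, Nat.reduceDiv, Nat.pow_zero, ite_testBit_zero]
    ring

theorem h_eq_pairWeight (k : ℕ) : h k = pairWeight (k / 2) := by
  have hk : k / 2 < 2 ^ k := (Nat.div_le_self k 2).trans_lt k.lt_two_pow_self
  rw [pairWeight_eq_sum k (hk.trans_le (Nat.pow_le_pow_left (by norm_num) k)),
    sum_range_testBit_eq_of_lt _ hk (by omega), h, ← Ico_add_one_right_eq_Icc,
    sum_Ico_eq_sum_range, Nat.add_sub_cancel]
  refine sum_congr rfl fun i _ => ?_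
  rw [add_comm 1 i, Nat.testBit_add_one, Nat.add_sub_cancel]

theorem mod_four_of_h_add_eq (k l : ℕ) (hk : Odd k) (hl : Odd l)
    (heq : h (k + l) = h k + h l + 1) : k % 4 = 1 ∧ l % 4 = 1 := by
  have hkl : (k + l) / 2 = k / 2 + l / 2 + 1 := by
    rw [Nat.odd_iff] at hk hl; omega
  rw [h_eq_pairWeight, h_eq_pairWeight, h_eq_pairWeight, hkl] at heq
  obtain ⟨⟨a, ha⟩, ⟨b, hb⟩⟩ := even_of_pairWeight_add_add_one heq
  rw [Nat.odd_iff] at hk hl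
  omega
end

section
/- With h defined from binary digits by h(k) = Σ_{i≥1} β_i 2^{⌊(i−1)/2⌋}: (a) if k is even then h(k+1) = h(k); (b) if k is odd then h(k+1) ≤ h(k) + 1. -/
/-!
Peeling off the two lowest relevant bits gives
`h n = ⌊n/2⌋ mod 2 + ⌊n/4⌋ mod 2 + 2 h ⌊n/4⌋`.
Passing from `k` to `k + 1` leaves `⌊k/4⌋` unchanged unless `k ≡ 3 (mod 4)`; in that case the
increment carries into `⌊k/4⌋`, which is handled by strong induction.
-/

lemma h_eq_sum_range {n N : ℕ} (hN : n ≤ N) :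
    h n = ∑ i ∈ Finset.range N, if n.testBit (i + 1) then 2 ^ (i / 2) else 0 := by
  have hzero : ∀ i ∈ Finset.Icc 1 N, i ∉ Finset.Icc 1 n →
      (if n.testBit i then 2 ^ ((i - 1) / 2) else 0) = 0 := by
    intro i hiN hi
    have hlt : n < 2 ^ i := (show n < i by simp at hiN hi; omega).trans Nat.lt_two_pow_self
    simp [Nat.testBit_lt_two_pow hlt]
  rw [h, Finset.sum_subset (Finset.Icc_subset_Icc_right hN) hzero,
    ← Finset.Ico_add_one_right_eq_Icc, Finset.sum_Ico_eq_sum_range]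
  simp [add_comm 1]

lemma ite_testBit_eq (n i : ℕ) : (if n.testBit i then 1 else 0) = n / 2 ^ i % 2 := by
  rw [← Nat.toNat_testBit]
  cases n.testBit i <;> rfl

lemma h_eq_div_four (n : ℕ) : h n = n / 2 % 2 + n / 4 % 2 + 2 * h (n / 4) := by
  rw [h_eq_sum_range (show n ≤ n + 2 by omega), Finset.sum_range_succ', Finset.sum_range_succ',
    h_eq_sum_range (Nat.div_le_self n 4), Finset.mul_sum]
  have hshift : ∀ i ∈ Finset.range n,
      (if n.testBit (i + 2 + 1) then 2 ^ ((i + 2) / 2) else 0)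
        = 2 * if (n / 4).testBit (i + 1) then 2 ^ (i / 2) else 0 := by
    intro i _
    rw [show n / 4 = n / 2 ^ 2 by norm_num, Nat.testBit_div_two_pow,
      show (i + 2) / 2 = i / 2 + 1 by omega, pow_succ]
    split_ifs <;> ring
  rw [Finset.sum_congr rfl hshift]
  simp only [zero_add, Nat.reduceDiv, pow_zero, ite_testBit_eq]
  norm_num
  ring

lemma h_succ_of_even {k : ℕ} (hk : Even k) : h (k + 1) = h k := by
  have hk2 : k % 2 = 0 := Nat.even_iff.mp hk
  rw [h_eq_div_four (k + 1), h_eq_div_four k, show (k + 1) / 2 = k / 2 by omega,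
    show (k + 1) / 4 = k / 4 by omega]

lemma h_succ_le_of_odd {k : ℕ} (hk : Odd k) : h (k + 1) ≤ h k + 1 := by
  induction k using Nat.strong_induction_on with
  | _ k ih =>
  have hk2 : k % 2 = 1 := Nat.odd_iff.mp hk
  rw [h_eq_div_four (k + 1), h_eq_div_four k]
  rcases (show k % 4 = 1 ∨ k % 4 = 3 by omega) with hk4 | hk4
  · rw [show (k + 1) / 4 = k / 4 by omega]
    omega
  · set q := k / 4
    -- The carry clears bit 1 of `k`, which pays for the increase of `h` from `q` to `q + 1`.
    have hcarry : (q + 1) % 2 + 2 * h (q + 1) ≤ q % 2 + 2 * h q + 2 := by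
      rcases Nat.even_or_odd q with hq2 | hq2
      · have := Nat.even_iff.mp hq2
        rw [h_succ_of_even hq2]
        omega
      · have := Nat.odd_iff.mp hq2
        have := ih q (by omega) hq2
        omega
    rw [show (k + 1) / 4 = q + 1 by omega]
    omega

theorem h_succ (k : ℕ) :
    (Even k → h (k + 1) = h k) ∧ (Odd k → h (k + 1) ≤ h k + 1) :=
  ⟨h_succ_of_even, h_succ_le_of_odd⟩
end

section
/- With h defined from binary digits by h(k) = Σ_{i≥1} β_i 2^{⌊(i−1)/2⌋}, for every natural number k one has h(k+4) ≤ h(k) + 1 and h(k+3) ≤ h(k) + 1. -/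
def hTerm (k i : ℕ) : ℕ := if k.testBit i then 2 ^ ((i - 1) / 2) else 0

lemma h_eq_sum_range_s7 {k n : ℕ} (hn : k ≤ n) : h k = ∑ i ∈ Finset.range n, hTerm k (i + 1) := by
  have hvanish : ∀ i ≥ k, hTerm k (i + 1) = 0 := fun i hi => by
    have hlt : k < 2 ^ (i + 1) :=
      hi.trans_lt (Nat.lt_two_pow_self.trans (Nat.pow_lt_pow_succ one_lt_two))
    simp [hTerm, Nat.testBit_lt_two_pow hlt]
  rw [Finset.eventually_constant_sum hvanish hn, Finset.range_eq_Ico, Finset.sum_Ico_add',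
    zero_add, Finset.Ico_add_one_right_eq_Icc]
  rfl

lemma hTerm_one (k : ℕ) : hTerm k 1 = k / 2 % 2 := by
  rw [hTerm, show k / 2 = k / 2 ^ 1 by rfl, ← Nat.toNat_testBit]
  cases k.testBit 1 <;> rfl

lemma hTerm_two (k : ℕ) : hTerm k 2 = k / 4 % 2 := by
  rw [hTerm, show k / 4 = k / 2 ^ 2 by rfl, ← Nat.toNat_testBit]
  cases k.testBit 2 <;> rfl

lemma hTerm_add_three (k i : ℕ) : hTerm k (i + 3) = 2 * hTerm (k / 4) (i + 1) := by
  have hexp : (i + 3 - 1) / 2 = (i + 1 - 1) / 2 + 1 := by omega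
  rw [hTerm, hTerm, show k / 4 = k / 2 ^ 2 by rfl, Nat.testBit_div_two_pow, hexp, pow_succ]
  split <;> ring

lemma h_eq_add_two_mul_h_div_four (k : ℕ) : h k = k / 2 % 2 + k / 4 % 2 + 2 * h (k / 4) := by
  rw [h_eq_sum_range_s7 (Nat.le_add_right k 2), h_eq_sum_range_s7 (Nat.div_le_self k 4),
    Finset.sum_range_succ', Finset.sum_range_succ', Finset.mul_sum]
  simp only [hTerm_add_three, zero_add, Nat.reduceAdd, hTerm_one, hTerm_two]
  ring

lemma h_four_mul (q : ℕ) : h (4 * q) = q % 2 + 2 * h q := by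
  rw [h_eq_add_two_mul_h_div_four, show 4 * q / 4 = q by omega, show 4 * q / 2 = 2 * q by omega]
  simp

lemma h_eq_h_four_mul_add (k : ℕ) : h k = h (4 * (k / 4)) + k % 4 / 2 := by
  rw [h_eq_add_two_mul_h_div_four k, h_four_mul]
  omega

lemma h_succ_le (k : ℕ) : h (k + 1) ≤ h k + 1 := by
  induction k using Nat.strong_induction_on with
  | _ k ih =>
    rcases Nat.even_or_odd k with hk | hk
    · rw [h_succ_of_even hk]; omega
    have hmod := Nat.odd_iff.mp hk
    rw [h_eq_h_four_mul_add (k + 1), h_eq_h_four_mul_add k]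
    rcases Nat.lt_or_ge (k % 4) 2 with hr | hr
    · rw [show (k + 1) / 4 = k / 4 by omega]
      omega
    rw [show (k + 1) / 4 = k / 4 + 1 by omega, h_four_mul, h_four_mul]
    rcases Nat.even_or_odd (k / 4) with hq | hq
    · have := h_succ_of_even hq
      omega
    · have := ih (k / 4) (by omega)
      have := Nat.odd_iff.mp hq
      omega

lemma h_four_mul_succ_le (q : ℕ) : h (4 * (q + 1)) ≤ h (4 * q) + 1 := by
  rw [h_four_mul, h_four_mul]
  rcases Nat.even_or_odd q with hq | hq
  · have := h_succ_of_even hq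
    have := Nat.even_iff.mp hq
    omega
  · have := h_succ_le q
    have := Nat.odd_iff.mp hq
    omega

theorem h_add_three_four (k : ℕ) :
    h (k + 4) ≤ h k + 1 ∧ h (k + 3) ≤ h k + 1 := by
  have hk := h_eq_h_four_mul_add k
  have hk3 := h_eq_h_four_mul_add (k + 3)
  have hk4 := h_eq_h_four_mul_add (k + 4)
  have hstep := h_four_mul_succ_le (k / 4)
  rw [show (k + 4) / 4 = k / 4 + 1 by omega] at hk4
  by_cases hr : k % 4 = 0
  · rw [show (k + 3) / 4 = k / 4 by omega] at hk3
    omega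
  · rw [show (k + 3) / 4 = k / 4 + 1 by omega] at hk3
    omega
end

section
/- For every odd natural number k ≥ 1, with h(k) = Σ_{i≥1} β_i 2^{⌊(i−1)/2⌋} built from the binary digits of k, one has 1 + √(k−1)/2 ≤ h(k) + 1 ≤ (3/2)√(k+1) − 1; in particular √k/2 < h(k)+1 < (3/2)√k for k > 1. -/
open Finset

def bitWeightSum (w : ℕ → ℕ) (m : ℕ) : ℕ :=
  if m = 0 then 0 else m % 2 * w 0 + bitWeightSum (fun j => w (j + 1)) (m / 2)
termination_by m
decreasing_by omega

theorem bitWeightSum_zero (w : ℕ → ℕ) : bitWeightSum w 0 = 0 := by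
  rw [bitWeightSum, if_pos rfl]

theorem bitWeightSum_eq (w : ℕ → ℕ) (m : ℕ) :
    bitWeightSum w m = m % 2 * w 0 + bitWeightSum (fun j => w (j + 1)) (m / 2) := by
  rcases eq_or_ne m 0 with rfl | hm
  · simp [bitWeightSum_zero]
  · rw [bitWeightSum, if_neg hm]

theorem bitWeightSum_eq_sum_range {N m : ℕ} (w : ℕ → ℕ) (hm : m < 2 ^ N) :
    bitWeightSum w m = ∑ j ∈ range N, if m.testBit j then w j else 0 := by
  induction N generalizing w m with
  | zero =>
    obtain rfl : m = 0 := by simpa using hm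
    exact bitWeightSum_zero w
  | succ N ih =>
    rw [bitWeightSum_eq, ih _ (by rw [pow_succ] at hm; omega), sum_range_succ']
    simp only [Nat.testBit_succ, Nat.testBit_zero]
    rcases Nat.mod_two_eq_zero_or_one m with h | h <;> simp [h, add_comm]

theorem bitWeightSum_mul_left (c : ℕ) (w : ℕ → ℕ) (m : ℕ) :
    bitWeightSum (fun j => c * w j) m = c * bitWeightSum w m := by
  rw [bitWeightSum_eq_sum_range _ Nat.lt_two_pow_self,
    bitWeightSum_eq_sum_range _ Nat.lt_two_pow_self, mul_sum]
  refine sum_congr rfl fun j _ => ?_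
  split <;> simp

theorem bitWeightSum_pos {w : ℕ → ℕ} (hw : ∀ j, 0 < w j) {m : ℕ} (hm : 0 < m) :
    0 < bitWeightSum w m := by
  induction m using Nat.strong_induction_on generalizing w with
  | _ m ih =>
    rw [bitWeightSum_eq]
    rcases Nat.mod_two_eq_zero_or_one m with h | h
    · have := ih (m / 2) (by omega) (fun j => hw (j + 1)) (by omega)
      omega
    · have := hw 0
      rw [h, one_mul]
      omega

def floorHalfSum (m : ℕ) : ℕ := bitWeightSum (fun j => 2 ^ (j / 2)) m

def ceilHalfSum (m : ℕ) : ℕ := bitWeightSum (fun j => 2 ^ ((j + 1) / 2)) m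

theorem floorHalfSum_eq (m : ℕ) : floorHalfSum m = m % 2 + ceilHalfSum (m / 2) := by
  rw [floorHalfSum, bitWeightSum_eq, ceilHalfSum]
  simp

theorem ceilHalfSum_eq (m : ℕ) : ceilHalfSum m = m % 2 + 2 * floorHalfSum (m / 2) := by
  rw [ceilHalfSum, bitWeightSum_eq, floorHalfSum, ← bitWeightSum_mul_left]
  have hw : (fun j => 2 ^ ((j + 1 + 1) / 2)) = fun j => 2 * 2 ^ (j / 2) := by
    funext j
    rw [show (j + 1 + 1) / 2 = j / 2 + 1 by omega, pow_succ, mul_comm]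
  simp [hw]

theorem floorHalfSum_two_mul (n : ℕ) : floorHalfSum (2 * n) = ceilHalfSum n := by
  simp [floorHalfSum_eq (2 * n)]

theorem floorHalfSum_two_mul_add_one (n : ℕ) :
    floorHalfSum (2 * n + 1) = ceilHalfSum n + 1 := by
  rw [floorHalfSum_eq, show (2 * n + 1) / 2 = n by omega]
  omega

theorem ceilHalfSum_two_mul (n : ℕ) : ceilHalfSum (2 * n) = 2 * floorHalfSum n := by
  simp [ceilHalfSum_eq (2 * n)]

theorem ceilHalfSum_two_mul_add_one (n : ℕ) :
    ceilHalfSum (2 * n + 1) = 2 * floorHalfSum n + 1 := by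
  rw [ceilHalfSum_eq, show (2 * n + 1) / 2 = n by omega]
  omega

theorem floorHalfSum_pos {m : ℕ} (hm : 0 < m) : 0 < floorHalfSum m :=
  bitWeightSum_pos (fun _ => by positivity) hm

theorem h_two_mul_add_one (m : ℕ) : h (2 * m + 1) = floorHalfSum m := by
  rw [floorHalfSum, bitWeightSum_eq_sum_range (N := 2 * m + 1) _
    (Nat.lt_two_pow_self.trans_le (Nat.pow_le_pow_right two_pos (by omega))), h,
    ← Ico_add_one_right_eq_Icc, sum_Ico_eq_sum_range, Nat.add_sub_cancel]
  refine sum_congr rfl fun j _ => ?_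
  rw [add_comm 1 j, Nat.testBit_succ, Nat.add_sub_cancel, show (2 * m + 1) / 2 = m by omega]

theorem le_halfSums_sq (m : ℕ) : m ≤ 2 * floorHalfSum m ^ 2 ∧ m ≤ ceilHalfSum m ^ 2 := by
  induction m using Nat.evenOddRec with
  | h0 => simp
  | h_even n ih =>
    obtain ⟨hg, hf⟩ := ih
    rw [floorHalfSum_two_mul, ceilHalfSum_two_mul]
    constructor <;> nlinarith
  | h_odd n ih =>
    obtain ⟨hg, hf⟩ := ih
    rw [floorHalfSum_two_mul_add_one, ceilHalfSum_two_mul_add_one]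
    constructor <;> nlinarith [Nat.zero_le (floorHalfSum n), Nat.zero_le (ceilHalfSum n)]

theorem halfSums_add_sq_le (m : ℕ) :
    2 * (floorHalfSum m + 2) ^ 2 ≤ 9 * (m + 1) ∧ (ceilHalfSum m + 3) ^ 2 ≤ 9 * (m + 1) := by
  induction m using Nat.evenOddRec with
  | h0 => simp [floorHalfSum, ceilHalfSum, bitWeightSum_zero]
  | h_even n ih =>
    obtain ⟨hg, hf⟩ := ih
    rcases eq_or_ne n 0 with rfl | hn
    · simp [floorHalfSum, ceilHalfSum, bitWeightSum_zero]
    have := floorHalfSum_pos (Nat.pos_of_ne_zero hn)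
    rw [floorHalfSum_two_mul, ceilHalfSum_two_mul]
    constructor <;> nlinarith [Nat.zero_le (ceilHalfSum n)]
  | h_odd n ih =>
    obtain ⟨hg, hf⟩ := ih
    rw [floorHalfSum_two_mul_add_one, ceilHalfSum_two_mul_add_one]
    constructor <;> nlinarith

theorem h_bounds_general (k : ℕ) (hk : Odd k) :
    (1 + Real.sqrt ((k : ℝ) - 1) / 2 ≤ (h k : ℝ) + 1 ∧
      (h k : ℝ) + 1 ≤ (3 / 2) * Real.sqrt ((k : ℝ) + 1) - 1) ∧
    (1 < k →
      Real.sqrt (k : ℝ) / 2 < (h k : ℝ) + 1 ∧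
      (h k : ℝ) + 1 < (3 / 2) * Real.sqrt (k : ℝ)) := by
  obtain ⟨m, rfl⟩ := hk
  rw [h_two_mul_add_one]
  set g : ℕ := floorHalfSum m
  have lower : (m : ℝ) ≤ 2 * (g : ℝ) ^ 2 := by exact_mod_cast (le_halfSums_sq m).1
  have upper : 2 * ((g : ℝ) + 2) ^ 2 ≤ 9 * ((m : ℝ) + 1) := by
    exact_mod_cast (halfSums_add_sq_le m).1
  have hg : (0 : ℝ) ≤ g := Nat.cast_nonneg _
  have hm : (0 : ℝ) ≤ m := Nat.cast_nonneg _
  push_cast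
  refine ⟨⟨?_, ?_⟩, fun _ => ⟨?_, ?_⟩⟩
  · have := (Real.sqrt_le_left (y := 2 * (g : ℝ)) (by positivity)).2
      (show 2 * (m : ℝ) + 1 - 1 ≤ _ by nlinarith)
    linarith
  · have := (Real.le_sqrt (by positivity) (by positivity)).2
      (show (2 / 3 * ((g : ℝ) + 2)) ^ 2 ≤ 2 * m + 1 + 1 by nlinarith)
    linarith
  · have := (Real.sqrt_lt' (by positivity)).2
      (show 2 * (m : ℝ) + 1 < (2 * ((g : ℝ) + 1)) ^ 2 by nlinarith)
    linarith
  · have := (Real.lt_sqrt (by positivity)).2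
      (show (2 / 3 * ((g : ℝ) + 1)) ^ 2 < 2 * m + 1 by nlinarith)
    linarith

theorem h_bounds (k : ℕ) (hk : Odd k) (h1 : 1 ≤ k) :
    (1 + Real.sqrt ((k : ℝ) - 1) / 2 ≤ (h k : ℝ) + 1 ∧
      (h k : ℝ) + 1 ≤ (3 / 2) * Real.sqrt ((k : ℝ) + 1) - 1) ∧
    (1 < k →
      Real.sqrt (k : ℝ) / 2 < (h k : ℝ) + 1 ∧
      (h k : ℝ) + 1 < (3 / 2) * Real.sqrt (k : ℝ)) :=
  h_bounds_general k hk
end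

section
/- For every odd natural number k ≥ 1, h(k)+1 = 1 + √(k−1)/2 holds if and only if k = 1 or k = 4^a + 1 for some a ≥ 1, where h(k) = Σ_{i≥1} β_i 2^{⌊(i−1)/2⌋}. -/
open Finset

lemma Finset.eq_of_mem_of_sq_sum_le_sum_sq {ι R : Type*} [CommSemiring R] [LinearOrder R]
    [IsStrictOrderedRing R] {s : Finset ι} {f : ι → R} (hf : ∀ i ∈ s, 0 < f i)
    (hsum : (∑ i ∈ s, f i) ^ 2 ≤ ∑ i ∈ s, f i ^ 2) {a b : ι} (ha : a ∈ s) (hb : b ∈ s) :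
    a = b := by
  classical
  by_contra hab
  refine hsum.not_gt ?_
  rw [sq, sum_mul]
  refine sum_lt_sum (fun i hi ↦ ?_) ⟨a, ha, ?_⟩
  · rw [sq]
    exact mul_le_mul_of_nonneg_left (single_le_sum (fun j hj ↦ (hf j hj).le) hi) (hf i hi).le
  · have hpair : f a + f b ≤ ∑ i ∈ s, f i := by
      rw [← sum_pair hab]
      exact sum_le_sum_of_subset_of_nonneg (by simp [insert_subset_iff, ha, hb])
        fun j hj _ ↦ (hf j hj).le
    calc f a ^ 2 < f a * (f a + f b) := by
          rw [sq]; exact mul_lt_mul_of_pos_left (lt_add_of_pos_right _ (hf b hb)) (hf a ha)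
      _ ≤ f a * ∑ i ∈ s, f i := mul_le_mul_of_nonneg_left hpair (hf a ha).le

lemma two_pow_le_two_mul_sq_two_pow_div_two (j : ℕ) : 2 ^ j ≤ 2 * (2 ^ (j / 2)) ^ 2 := by
  rw [← pow_mul, ← pow_succ']
  exact Nat.pow_le_pow_right two_pos (by omega)

lemma two_mul_sq_two_pow_div_two_eq_iff (j : ℕ) : 2 * (2 ^ (j / 2)) ^ 2 = 2 ^ j ↔ Odd j := by
  rw [← pow_mul, ← pow_succ', Nat.pow_right_inj one_lt_two, Nat.odd_iff]
  omega

lemma two_mul_sq_sum_eq_sum_two_pow_iff (s : Finset ℕ) :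
    2 * (∑ j ∈ s, 2 ^ (j / 2)) ^ 2 = ∑ j ∈ s, 2 ^ j ↔ s = ∅ ∨ ∃ b, s = {2 * b + 1} := by
  constructor
  · intro heq
    have hle : ∑ j ∈ s, 2 ^ j ≤ ∑ j ∈ s, 2 * (2 ^ (j / 2)) ^ 2 :=
      sum_le_sum fun j _ ↦ two_pow_le_two_mul_sq_two_pow_div_two j
    have hsq : ∑ j ∈ s, (2 ^ (j / 2)) ^ 2 ≤ (∑ j ∈ s, 2 ^ (j / 2)) ^ 2 :=
      sum_sq_le_sq_sum_of_nonneg fun _ _ ↦ Nat.zero_le _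
    rw [← mul_sum] at hle
    have htermwise : ∀ j ∈ s, 2 ^ j = 2 * (2 ^ (j / 2)) ^ 2 := by
      refine (sum_eq_sum_iff_of_le fun j _ ↦ two_pow_le_two_mul_sq_two_pow_div_two j).mp ?_
      rw [← mul_sum]; omega
    have hodd : ∀ j ∈ s, Odd j := fun j hj ↦
      (two_mul_sq_two_pow_div_two_eq_iff j).mp (htermwise j hj).symm
    have hsub : ∀ a ∈ s, ∀ b ∈ s, a = b := fun a ha b hb ↦
      eq_of_mem_of_sq_sum_le_sum_sq (f := fun j ↦ 2 ^ (j / 2)) (fun _ _ ↦ by positivity)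
        (by omega) ha hb
    obtain rfl | ⟨j, hj⟩ := s.eq_empty_or_nonempty
    · exact Or.inl rfl
    obtain ⟨b, rfl⟩ := hodd j hj
    exact Or.inr ⟨b, eq_singleton_iff_unique_mem.mpr ⟨hj, fun a ha ↦ hsub a ha _ hj⟩⟩
  · rintro (rfl | ⟨b, rfl⟩)
    · simp
    · simpa using (two_mul_sq_two_pow_div_two_eq_iff (2 * b + 1)).mpr (odd_two_mul_add_one b)

lemma h_two_mul_add_one_s12 (m : ℕ) : h (2 * m + 1) = ∑ j ∈ m.bitIndices.toFinset, 2 ^ (j / 2) := by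
  have hbits : {i ∈ Icc 1 (2 * m + 1) | (2 * m + 1).testBit i} =
      m.bitIndices.toFinset.map (addRightEmbedding 1) := by
    ext i
    obtain _ | j := i
    · simp
    have hdiv : (2 * m + 1) / 2 = m := by omega
    simp only [mem_filter, mem_Icc, Nat.testBit_add_one, hdiv, mem_map, List.mem_toFinset,
      Nat.mem_bitIndices, addRightEmbedding_apply, Nat.add_right_cancel_iff, exists_eq_right]
    refine ⟨And.right, fun hj ↦ ⟨⟨by omega, ?_⟩, hj⟩⟩
    have := Nat.ge_two_pow_of_testBit hj
    have := j.lt_two_pow_self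
    omega
  rw [h, ← sum_filter, hbits, sum_map]
  simp

lemma two_mul_sq_sum_bitIndices_eq_self_iff (m : ℕ) :
    2 * (∑ j ∈ m.bitIndices.toFinset, 2 ^ (j / 2)) ^ 2 = m ↔ m = 0 ∨ ∃ b, m = 2 ^ (2 * b + 1) := by
  have key := two_mul_sq_sum_eq_sum_two_pow_iff m.bitIndices.toFinset
  rw [sum_toFinset_bitIndices_two_pow] at key
  simp_rw [key, ← equivBitIndices_apply, ← equivBitIndices.eq_symm_apply]
  simp

theorem h_min_characterization_general (k : ℕ) (hk : Odd k) :
    ((h k : ℝ) + 1 = 1 + Real.sqrt ((k : ℝ) - 1) / 2) ↔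
      (k = 1 ∨ ∃ a : ℕ, 1 ≤ a ∧ k = 4 ^ a + 1) := by
  obtain ⟨m, rfl⟩ := hk
  have hsqrt : (h (2 * m + 1) : ℝ) = √(((2 * m + 1 : ℕ) : ℝ) - 1) / 2 ↔
      2 * h (2 * m + 1) ^ 2 = m := by
    have hcast : ((2 * m + 1 : ℕ) : ℝ) - 1 = 2 * m := by push_cast; ring
    rw [hcast, eq_div_iff two_ne_zero, eq_comm, Real.sqrt_eq_iff_eq_sq (by positivity)
      (by positivity), ← Nat.cast_inj (R := ℝ)]
    push_cast
    constructor <;> intro hsq <;> linarith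
  rw [add_comm (1 : ℝ), add_right_cancel_iff, hsqrt, h_two_mul_add_one_s12,
    two_mul_sq_sum_bitIndices_eq_self_iff]
  have hpow (b : ℕ) : 4 ^ (b + 1) = 2 * 2 ^ (2 * b + 1) := by
    rw [show 4 = 2 ^ 2 by rfl, ← pow_mul]; ring
  refine or_congr (by omega) ⟨fun ⟨b, hb⟩ ↦ ⟨b + 1, by omega, by rw [hpow, hb]⟩, ?_⟩
  rintro ⟨a, ha, hk⟩
  obtain ⟨b, rfl⟩ := Nat.exists_eq_add_of_le' ha
  exact ⟨b, by rw [hpow] at hk; omega⟩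

theorem h_min_characterization (k : ℕ) (hk : Odd k) (h1 : 1 ≤ k) :
    ((h k : ℝ) + 1 = 1 + Real.sqrt ((k : ℝ) - 1) / 2) ↔
      (k = 1 ∨ ∃ a : ℕ, 1 ≤ a ∧ k = 4 ^ a + 1) :=
  h_min_characterization_general k hk
end

section
/- For every odd natural number k ≥ 1, (n₃(k)+1)² ≤ 1 + (3/2)(k−1), i.e. n₃(k) ≤ √((3k−1)/2) − 1, with equality if and only if k = 1 + 2·(4^a−1)/3 for some a ≥ 0, where n₃(k) = Σ_{i≥0} β_{2i+1} 2^i is built from the binary digits of k. -/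
/-!
Let `n = n₃(k)` and let `s(n)` be the number whose base-4 digits are the binary digits of `n`
(the Moser–de Bruijn sequence). The odd-position bits of `k` form the number `2 s(n)`, so
`2 s(n) ≤ k - 1` when `k` is odd, and it remains to show `(n + 1)² ≤ 3 s(n) + 1`. Appending a
binary digit `1` to `n` multiplies both sides by `4`, while appending a `0` makes the left side
fall strictly behind unless `n = 0`; hence equality holds exactly for `n = 2^a - 1`, and then
`k = 1 + 2 s(2^a - 1) = 1 + 2 (4^a - 1) / 3`.
-/

/-- `n₃ k = Σ_{i≥0} β_{2i+1} 2^i` from the binary digits of `k`. -/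
def n3 (k : ℕ) : ℕ := ∑ i ∈ Finset.range (k + 1), if k.testBit (2 * i + 1) then 2 ^ i else 0

/-- `n₅ k = Σ_{i≥0} β_{2i+2} 2^i` from the binary digits of `k`. -/
def n5 (k : ℕ) : ℕ := ∑ i ∈ Finset.range (k + 1), if k.testBit (2 * i + 2) then 2 ^ i else 0

def moserDeBruijn (n : ℕ) : ℕ :=
  if h : n = 0 then 0 else n % 2 + 4 * moserDeBruijn (n / 2)
decreasing_by omega

theorem moserDeBruijn_zero : moserDeBruijn 0 = 0 := by
  rw [moserDeBruijn, dif_pos rfl]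

theorem moserDeBruijn_eq (n : ℕ) : moserDeBruijn n = n % 2 + 4 * moserDeBruijn (n / 2) := by
  rcases Nat.eq_zero_or_pos n with rfl | hn
  · simp [moserDeBruijn_zero]
  · rw [moserDeBruijn, dif_neg hn.ne']

theorem moserDeBruijn_two_mul (n : ℕ) : moserDeBruijn (2 * n) = 4 * moserDeBruijn n := by
  rw [moserDeBruijn_eq, Nat.mul_mod_right, Nat.mul_div_cancel_left _ two_pos, zero_add]

theorem moserDeBruijn_two_mul_add_one (n : ℕ) :
    moserDeBruijn (2 * n + 1) = 4 * moserDeBruijn n + 1 := by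
  rw [moserDeBruijn_eq, show (2 * n + 1) / 2 = n by omega, show (2 * n + 1) % 2 = 1 by omega,
    add_comm]

theorem three_mul_moserDeBruijn_two_pow_sub_one_add_one (a : ℕ) :
    3 * moserDeBruijn (2 ^ a - 1) + 1 = 4 ^ a := by
  induction a with
  | zero => simp [moserDeBruijn_zero]
  | succ a ih =>
    have h2a : 2 ^ (a + 1) - 1 = 2 * (2 ^ a - 1) + 1 := by
      have := Nat.one_le_two_pow (n := a)
      rw [pow_succ]; omega
    rw [h2a, moserDeBruijn_two_mul_add_one, pow_succ]
    omega

theorem sq_add_one_le_moserDeBruijn (n : ℕ) : (n + 1) ^ 2 ≤ 3 * moserDeBruijn n + 1 := by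
  induction n using Nat.evenOddRec with
  | h0 => simp [moserDeBruijn_zero]
  | h_even n ih =>
    have : (2 * n + 1) ^ 2 + 4 * n + 3 = 4 * (n + 1) ^ 2 := by ring
    rw [moserDeBruijn_two_mul]; omega
  | h_odd n ih =>
    have : (2 * n + 1 + 1) ^ 2 = 4 * (n + 1) ^ 2 := by ring
    rw [moserDeBruijn_two_mul_add_one]; omega

theorem exists_two_pow_of_sq_add_one_eq_moserDeBruijn {n : ℕ}
    (h : (n + 1) ^ 2 = 3 * moserDeBruijn n + 1) : ∃ a, n + 1 = 2 ^ a := by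
  induction n using Nat.evenOddRec with
  | h0 => exact ⟨0, rfl⟩
  | h_even n _ =>
    have hle := sq_add_one_le_moserDeBruijn n
    have : (2 * n + 1) ^ 2 + 4 * n + 3 = 4 * (n + 1) ^ 2 := by ring
    rw [moserDeBruijn_two_mul] at h
    have hn : n = 0 := by omega
    exact ⟨0, by simp [hn]⟩
  | h_odd n ih =>
    have : (2 * n + 1 + 1) ^ 2 = 4 * (n + 1) ^ 2 := by ring
    rw [moserDeBruijn_two_mul_add_one] at h
    obtain ⟨a, ha⟩ := ih (by omega)
    exact ⟨a + 1, by rw [pow_succ]; omega⟩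

theorem n3_eq_sum_range {k N : ℕ} (h : k < N) :
    n3 k = ∑ i ∈ Finset.range N, if k.testBit (2 * i + 1) then 2 ^ i else 0 := by
  refine Finset.sum_subset (Finset.range_subset_range.2 h) fun i _ hi => ?_
  have hki : k < 2 ^ (2 * i + 1) :=
    Nat.lt_two_pow_self.trans_le (Nat.pow_le_pow_right two_pos (by simp at hi; omega))
  simp [Nat.testBit_eq_false_of_lt hki]

theorem n3_eq (k : ℕ) : n3 k = k / 2 % 2 + 2 * n3 (k / 4) := by
  rw [n3_eq_sum_range (by omega : k < k + 2), Finset.sum_range_succ',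
    n3_eq_sum_range (by omega : k / 4 < k + 1), Finset.mul_sum, add_comm]
  congr 1
  · rw [Nat.testBit_eq_decide_div_mod_eq]
    split_ifs <;> simp_all
  · refine Finset.sum_congr rfl fun i _ => ?_
    rw [show k / 4 = k / 2 ^ 2 by norm_num, Nat.testBit_div_two_pow,
      show 2 * (i + 1) + 1 = 2 * i + 1 + 2 by ring]
    split_ifs <;> ring

theorem n3_two_mul_moserDeBruijn_add (x y : ℕ) :
    n3 (2 * moserDeBruijn x + moserDeBruijn y) = x := by
  induction h : x + y using Nat.strong_induction_on generalizing x y with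
  | _ s ih =>
  rcases Nat.eq_zero_or_pos s with rfl | hs
  · obtain ⟨rfl, rfl⟩ : x = 0 ∧ y = 0 := by omega
    simp [moserDeBruijn_zero, n3]
  have hx := moserDeBruijn_eq x
  have hy := moserDeBruijn_eq y
  have hdiv : (2 * moserDeBruijn x + moserDeBruijn y) / 4 =
      2 * moserDeBruijn (x / 2) + moserDeBruijn (y / 2) := by omega
  rw [n3_eq, hdiv, ih (x / 2 + y / 2) (by omega) _ _ rfl]
  omega

theorem two_mul_moserDeBruijn_n3_le (k : ℕ) : 2 * moserDeBruijn (n3 k) ≤ k := by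
  induction k using Nat.strong_induction_on with
  | _ k ih =>
  rcases Nat.eq_zero_or_pos k with rfl | hk
  · simp [n3, moserDeBruijn_zero]
  have hrec := n3_eq k
  have hmd := moserDeBruijn_eq (n3 k)
  rw [show n3 k / 2 = n3 (k / 4) by omega] at hmd
  have := ih (k / 4) (by omega)
  omega

theorem sq_n3_succ_le (m : ℕ) : (n3 (2 * m + 1) + 1) ^ 2 ≤ 3 * m + 1 := by
  have := sq_add_one_le_moserDeBruijn (n3 (2 * m + 1))
  have := two_mul_moserDeBruijn_n3_le (2 * m + 1)
  omega

theorem sq_n3_succ_eq_iff (m : ℕ) :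
    (n3 (2 * m + 1) + 1) ^ 2 = 3 * m + 1 ↔
      ∃ a : ℕ, 2 * m + 1 = 1 + 2 * ((4 ^ a - 1) / 3) := by
  have two_pow_sq (a : ℕ) : (2 ^ a) ^ 2 = 4 ^ a := by rw [← pow_mul, pow_mul']; norm_num
  constructor
  · intro h
    have hle := two_mul_moserDeBruijn_n3_le (2 * m + 1)
    have hsq := sq_add_one_le_moserDeBruijn (n3 (2 * m + 1))
    obtain ⟨a, ha⟩ :=
      exists_two_pow_of_sq_add_one_eq_moserDeBruijn (n := n3 (2 * m + 1)) (by omega)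
    have h4 : 4 ^ a = 3 * m + 1 := by rw [← h, ha, two_pow_sq]
    exact ⟨a, by omega⟩
  · rintro ⟨a, ha⟩
    have h4 := three_mul_moserDeBruijn_two_pow_sub_one_add_one a
    have h1 : moserDeBruijn 1 = 1 := by
      simpa [moserDeBruijn_zero] using moserDeBruijn_two_mul_add_one 0
    have hm : 2 * m + 1 = 2 * moserDeBruijn (2 ^ a - 1) + moserDeBruijn 1 := by omega
    rw [hm, n3_two_mul_moserDeBruijn_add, Nat.sub_add_cancel Nat.one_le_two_pow, two_pow_sq]
    omega

theorem n3_bound_general (k : ℕ) (hk : Odd k) :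
    ((n3 k : ℝ) + 1) ^ 2 ≤ 1 + (3 / 2) * ((k : ℝ) - 1) ∧
    (((n3 k : ℝ) + 1) ^ 2 = 1 + (3 / 2) * ((k : ℝ) - 1) ↔
      ∃ a : ℕ, k = 1 + 2 * ((4 ^ a - 1) / 3)) := by
  obtain ⟨m, rfl⟩ := hk
  have hrhs : 1 + (3 / 2) * (((2 * m + 1 : ℕ) : ℝ) - 1) = ((3 * m + 1 : ℕ) : ℝ) := by
    push_cast; ring
  rw [hrhs]
  exact_mod_cast And.intro (sq_n3_succ_le m) (sq_n3_succ_eq_iff m)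

theorem n3_bound (k : ℕ) (hk : Odd k) (h1 : 1 ≤ k) :
    ((n3 k : ℝ) + 1) ^ 2 ≤ 1 + (3 / 2) * ((k : ℝ) - 1) ∧
    (((n3 k : ℝ) + 1) ^ 2 = 1 + (3 / 2) * ((k : ℝ) - 1) ↔
      ∃ a : ℕ, k = 1 + 2 * ((4 ^ a - 1) / 3)) :=
  n3_bound_general k hk
end

section
/- For every odd natural number k ≥ 1, (n₅(k)+1)² ≤ (3k+1)/4, i.e. n₅(k) ≤ √((3k+1)/4) − 1, with equality if and only if k = (4^a − 1)/3 for some a ≥ 1, where n₅(k) = Σ_{i≥0} β_{2i+2} 2^i is built from the binary digits of k. -/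
/-! `n₅ k = E ⌊k / 4⌋`, where `E q = evenBits q` collects the bits of `q` in even positions.
Splitting off the lowest base-4 digit `s` of `q = 4p + s` gives `E q = (s mod 2) + 2 E p`, and by
induction this yields `(E q + 1)² ≤ 3q + 1`, with equality exactly when every base-4 digit of `q`
is `1`, i.e. when `3q + 1` is a power of `4`. For odd `k` the lowest bit is `1`, so
`E k + 1 = 2 (n₅ k + 1)`. -/

def evenBits (q : ℕ) : ℕ := ∑ i ∈ Finset.range (q + 1), if q.testBit (2 * i) then 2 ^ i else 0

lemma Nat.testBit_eq_false_of_le {q i : ℕ} (h : q ≤ i) : q.testBit i = false :=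
  Nat.testBit_lt_two_pow (h.trans_lt Nat.lt_two_pow_self)

lemma Nat.testBit_div_four (q i : ℕ) : (q / 4).testBit i = q.testBit (i + 2) :=
  Nat.testBit_div_two_pow (n := 2) q i

lemma sum_range_eq_evenBits {q n : ℕ} (h : q < n) :
    ∑ i ∈ Finset.range n, (if q.testBit (2 * i) then 2 ^ i else 0) = evenBits q := by
  refine (Finset.sum_subset (Finset.range_subset_range.2 h) fun i _ hi => ?_).symm
  simp only [Finset.mem_range, not_lt] at hi
  simp [Nat.testBit_eq_false_of_le (show q ≤ 2 * i by omega)]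

lemma n5_eq_evenBits (k : ℕ) : n5 k = evenBits (k / 4) := by
  simp only [n5, ← Nat.testBit_div_four]
  exact sum_range_eq_evenBits (by omega)

lemma evenBits_eq (q : ℕ) : evenBits q = q % 2 + 2 * evenBits (q / 4) := by
  rcases Nat.eq_zero_or_pos q with rfl | hq
  · simp [evenBits]
  rw [evenBits, Finset.sum_range_succ', ← sum_range_eq_evenBits (show q / 4 < q by omega),
    Finset.mul_sum, add_comm]
  congr 1
  · rcases Nat.mod_two_eq_zero_or_one q with h | h <;> simp [Nat.testBit_zero, h]
  · refine Finset.sum_congr rfl fun i _ => ?_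
    rw [Nat.testBit_div_four, show 2 * (i + 1) = 2 * i + 2 by ring, pow_succ]
    split <;> ring

lemma evenBits_four_mul_add {p s : ℕ} (hs : s < 4) :
    evenBits (4 * p + s) = s % 2 + 2 * evenBits p := by
  rw [evenBits_eq, show (4 * p + s) / 4 = p by omega, show (4 * p + s) % 2 = s % 2 by omega]

lemma add_one_sq_le_of_digit {e p s : ℕ} (hs : s < 4) (h : (e + 1) ^ 2 ≤ 3 * p + 1) :
    (s % 2 + 2 * e + 1) ^ 2 ≤ 3 * (4 * p + s) + 1 := by
  -- with these identities `omega` can treat `(e + 1) ^ 2` as an atom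
  have hodd : (2 * e + 1) ^ 2 + 4 * e + 3 = 4 * (e + 1) ^ 2 := by ring
  have heven : (1 + 2 * e + 1) ^ 2 = 4 * (e + 1) ^ 2 := by ring
  interval_cases s <;> simp only [Nat.reduceMod, zero_add] <;> omega

lemma add_one_sq_eq_iff_of_digit {e p s : ℕ} (hs : s < 4) (h : (e + 1) ^ 2 ≤ 3 * p + 1) :
    (s % 2 + 2 * e + 1) ^ 2 = 3 * (4 * p + s) + 1 ↔
      4 * p + s = 0 ∨ s = 1 ∧ (e + 1) ^ 2 = 3 * p + 1 := by
  have hone : (e + 1) ^ 2 = 1 ↔ e = 0 := by simp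
  have hodd : (2 * e + 1) ^ 2 + 4 * e + 3 = 4 * (e + 1) ^ 2 := by ring
  have heven : (1 + 2 * e + 1) ^ 2 = 4 * (e + 1) ^ 2 := by ring
  interval_cases s <;> simp only [Nat.reduceMod, zero_add, true_and] <;> omega

lemma exists_pow_four_eq_iff_of_digit {p s : ℕ} (hs : s < 4) :
    (∃ a, 3 * (4 * p + s) + 1 = 4 ^ a) ↔ 4 * p + s = 0 ∨ s = 1 ∧ ∃ a, 3 * p + 1 = 4 ^ a := by
  constructor
  · rintro ⟨_ | a, ha⟩
    · exact .inl (by simp at ha; omega)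
    · rw [pow_succ] at ha
      exact .inr ⟨by omega, a, by omega⟩
  · rintro (h | ⟨rfl, a, ha⟩)
    · exact ⟨0, by simp; omega⟩
    · exact ⟨a + 1, by rw [pow_succ]; omega⟩

lemma Nat.exists_eq_four_mul_add (q : ℕ) : ∃ p s, s < 4 ∧ q = 4 * p + s :=
  ⟨q / 4, q % 4, Nat.mod_lt _ (by norm_num), (Nat.div_add_mod q 4).symm⟩

lemma evenBits_add_one_sq_le (q : ℕ) : (evenBits q + 1) ^ 2 ≤ 3 * q + 1 := by
  induction q using Nat.strong_induction_on with
  | _ q ih =>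
  rcases Nat.eq_zero_or_pos q with rfl | hq
  · simp [evenBits]
  obtain ⟨p, s, hs, rfl⟩ := Nat.exists_eq_four_mul_add q
  rw [evenBits_four_mul_add hs]
  exact add_one_sq_le_of_digit hs (ih p (by omega))

lemma evenBits_add_one_sq_eq_iff (q : ℕ) :
    (evenBits q + 1) ^ 2 = 3 * q + 1 ↔ ∃ a, 3 * q + 1 = 4 ^ a := by
  induction q using Nat.strong_induction_on with
  | _ q ih =>
  rcases Nat.eq_zero_or_pos q with rfl | hq
  · simpa [evenBits] using ⟨0, rfl⟩
  obtain ⟨p, s, hs, rfl⟩ := Nat.exists_eq_four_mul_add q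
  rw [evenBits_four_mul_add hs, add_one_sq_eq_iff_of_digit hs (evenBits_add_one_sq_le p),
    exists_pow_four_eq_iff_of_digit hs, ih p (by omega)]

lemma evenBits_add_one_eq_two_mul_n5_add_one {k : ℕ} (hk : Odd k) :
    evenBits k + 1 = 2 * (n5 k + 1) := by
  have hk_mod := Nat.odd_iff.1 hk
  have hdigit := evenBits_four_mul_add (p := k / 4) (Nat.mod_lt k (show 4 > 0 by norm_num))
  rw [Nat.div_add_mod] at hdigit
  rw [n5_eq_evenBits]
  omega

lemma three_mul_add_one_eq_pow_four_iff (k a : ℕ) : 3 * k + 1 = 4 ^ a ↔ k = (4 ^ a - 1) / 3 := by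
  have h3 : 3 ∣ 4 ^ a - 1 := by simpa using Nat.sub_dvd_pow_sub_pow 4 1 a
  have h1 : 1 ≤ 4 ^ a := Nat.one_le_pow _ _ (by norm_num)
  omega

lemma exists_pow_four_eq_iff {k : ℕ} (hk : k ≠ 0) :
    (∃ a, 3 * k + 1 = 4 ^ a) ↔ ∃ a : ℕ, 1 ≤ a ∧ k = (4 ^ a - 1) / 3 := by
  refine exists_congr fun a => ⟨fun h => ⟨?_, (three_mul_add_one_eq_pow_four_iff k a).1 h⟩,
    fun h => (three_mul_add_one_eq_pow_four_iff k a).2 h.2⟩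
  rcases a with _ | a
  · simp at h; omega
  · omega

theorem n5_bound_general (k : ℕ) (hk : Odd k) :
    ((n5 k : ℝ) + 1) ^ 2 ≤ (3 * (k : ℝ) + 1) / 4 ∧
    (((n5 k : ℝ) + 1) ^ 2 = (3 * (k : ℝ) + 1) / 4 ↔
      ∃ a : ℕ, 1 ≤ a ∧ k = (4 ^ a - 1) / 3) := by
  have hsq : ((n5 k : ℝ) + 1) ^ 2 = (((evenBits k + 1) ^ 2 : ℕ) : ℝ) / 4 := by
    rw [evenBits_add_one_eq_two_mul_n5_add_one hk]
    push_cast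
    ring
  have hcast : 3 * (k : ℝ) + 1 = ((3 * k + 1 : ℕ) : ℝ) := by push_cast; ring
  rw [hsq, hcast, div_le_div_iff_of_pos_right four_pos, div_left_inj' four_ne_zero,
    Nat.cast_le, Nat.cast_inj, evenBits_add_one_sq_eq_iff, exists_pow_four_eq_iff hk.pos.ne']
  exact ⟨evenBits_add_one_sq_le k, Iff.rfl⟩

theorem n5_bound (k : ℕ) (hk : Odd k) (h1 : 1 ≤ k) :
    ((n5 k : ℝ) + 1) ^ 2 ≤ (3 * (k : ℝ) + 1) / 4 ∧
    (((n5 k : ℝ) + 1) ^ 2 = (3 * (k : ℝ) + 1) / 4 ↔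
      ∃ a : ℕ, 1 ≤ a ∧ k = (4 ^ a - 1) / 3) :=
  n5_bound_general k hk
end

section
/- Let Δ = Σ_{m≥0} q^{(2m+1)²} ∈ F₂[[q]] and, for an odd prime p, define T_p on F₂[[q]] by (T_p f)(q) = Σ_n γ_n q^n where γ_n = c_{pn} if p ∤ n and γ_n = c_{pn} + c_{n/p} if p | n (f = Σ c_n q^n). Then T_p Δ = 0 for every odd prime p. -/
/-!
Over `F₂` the coefficient `γ_n = c_{pn} + [p ∣ n] c_{n/p}` vanishes exactly when its two terms agree.
For `Δ` they do: if `pn` is a square then `p ∣ n`, and for odd `p` the number `p²k` is an odd square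
exactly when `k` is.
-/

open Classical in
/-- The reduction mod 2 of the Δ series: `Δ = Σ_{m≥0} q^{(2m+1)²}` in `F₂[[q]]`. -/
noncomputable def Delta : PowerSeries (ZMod 2) :=
  PowerSeries.mk fun n => if ∃ m : ℕ, n = (2 * m + 1) ^ 2 then 1 else 0

/-- The mod 2 Hecke operator `T_p` on `F₂[[q]]`. -/
noncomputable def heckeT (p : ℕ) (f : PowerSeries (ZMod 2)) : PowerSeries (ZMod 2) :=
  PowerSeries.mk fun n =>
    PowerSeries.coeff (p * n) f +
      if p ∣ n then PowerSeries.coeff (n / p) f else 0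

open PowerSeries

theorem Nat.isSquare_mul_self_mul_iff {a k : ℕ} (ha : a ≠ 0) :
    IsSquare (a * a * k) ↔ IsSquare k := by
  refine ⟨fun ⟨r, hr⟩ => ?_, (IsSquare.mul_self a).mul⟩
  obtain ⟨s, rfl⟩ : a ∣ r := (Nat.pow_dvd_pow_iff two_ne_zero).1 ⟨k, by rw [sq, sq, ← hr]⟩
  exact ⟨s, mul_left_cancel₀ (mul_ne_zero ha ha) (by rw [hr]; ring)⟩

theorem Nat.Prime.dvd_of_isSquare_mul {p n : ℕ} (hp : p.Prime) (h : IsSquare (p * n)) : p ∣ n := by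
  obtain ⟨r, hr⟩ := h
  obtain ⟨s, rfl⟩ : p ∣ r := hp.prime.dvd_of_dvd_pow (n := 2) ⟨n, by rw [sq, ← hr]⟩
  exact ⟨s * s, mul_left_cancel₀ hp.ne_zero (by rw [hr]; ring)⟩

theorem Nat.exists_eq_two_mul_add_one_sq_iff {n : ℕ} :
    (∃ m, n = (2 * m + 1) ^ 2) ↔ IsSquare n ∧ Odd n := by
  constructor
  · rintro ⟨m, rfl⟩
    exact ⟨⟨2 * m + 1, sq _⟩, (odd_two_mul_add_one m).pow⟩
  · rintro ⟨⟨r, rfl⟩, hodd⟩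
    obtain ⟨m, rfl⟩ := (Nat.odd_mul.1 hodd).1
    exact ⟨m, (sq _).symm⟩

theorem Nat.Prime.isSquare_and_odd_mul_iff {p n : ℕ} (hp : p.Prime) (hodd : Odd p) :
    IsSquare (p * n) ∧ Odd (p * n) ↔ p ∣ n ∧ IsSquare (n / p) ∧ Odd (n / p) := by
  by_cases hdvd : p ∣ n
  · obtain ⟨k, rfl⟩ := hdvd
    rw [Nat.mul_div_cancel_left k hp.pos, ← mul_assoc, Nat.isSquare_mul_self_mul_iff hp.ne_zero]
    simp [Nat.odd_mul, hodd]
  · simp only [hdvd, false_and, iff_false, not_and]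
    exact fun hsq _ => hdvd (hp.dvd_of_isSquare_mul hsq)

theorem coeff_Delta (n : ℕ) : coeff n Delta = if IsSquare n ∧ Odd n then 1 else 0 := by
  simp only [Delta, coeff_mk, Nat.exists_eq_two_mul_add_one_sq_iff]

theorem heckeT_eq_zero_iff {p : ℕ} {f : PowerSeries (ZMod 2)} :
    heckeT p f = 0 ↔ ∀ n, coeff (p * n) f = if p ∣ n then coeff (n / p) f else 0 := by
  simp only [PowerSeries.ext_iff, heckeT, coeff_mk, map_zero, CharTwo.add_eq_zero]

theorem heckeT_Delta_eq_zero (p : ℕ) (hp : p.Prime) (hodd : Odd p) :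
    heckeT p Delta = 0 := by
  refine heckeT_eq_zero_iff.2 fun n => ?_
  simp only [coeff_Delta, hp.isSquare_and_odd_mul_iff hodd]
  by_cases hdvd : p ∣ n <;> simp [hdvd]
end

section
/- In F₂[[q]], the series x = Δ(q) and y = Δ(q³), where Δ(q) = Σ_{m≥0} q^{(2m+1)²}, satisfy the polynomial relation y⁴ + x·y + x⁴ = 0. -/
open Classical in
/-- `Δ(q³) = Σ_{m≥0} q^{3(2m+1)²}` in `F₂[[q]]`. -/
noncomputable def DeltaCubedVar : PowerSeries (ZMod 2) :=
  PowerSeries.mk fun n => if ∃ m : ℕ, n = 3 * (2 * m + 1) ^ 2 then 1 else 0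

open Finset PowerSeries

theorem PowerSeries.pow_prime_pow_eq_expand {p : ℕ} [hp : Fact p.Prime] (k : ℕ)
    (f : PowerSeries (ZMod p)) :
    f ^ p ^ k = expand (p ^ k) (pow_ne_zero k hp.out.ne_zero) f := by
  have hFrobenius : iterateFrobenius (ZMod p) p k = RingHom.id _ := by
    ext x
    simp [iterateFrobenius_def, ZMod.pow_card_pow]
  rw [← MvPowerSeries.map_iterateFrobenius_expand p hp.out.ne_zero f k, hFrobenius,
    MvPowerSeries.map_id]
  rfl

theorem Finset.natCast_card_eq_card_filter_isFixedPt {α : Type*} [DecidableEq α]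
    (s : Finset α) (σ : α → α) (hσs : ∀ x ∈ s, σ x ∈ s) (hσσ : ∀ x ∈ s, σ (σ x) = x) :
    (#s : ZMod 2) = #{x ∈ s | σ x = x} := by
  have hMoved : ∑ x ∈ s with ¬σ x = x, (1 : ZMod 2) = 0 := by
    refine sum_involution (fun x _ => σ x) (fun _ _ => by decide) (fun x hx _ => ?_)
      (fun x hx => ?_) (fun x hx => hσσ x (mem_filter.1 hx).1)
    · exact (mem_filter.1 hx).2
    · obtain ⟨hxs, hx⟩ := mem_filter.1 hx
      exact mem_filter.2 ⟨hσs x hxs, fun h => hx (by rwa [hσσ x hxs, eq_comm] at h)⟩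
  rw [← card_filter_add_card_filter_not (fun x => σ x = x), Nat.cast_add,
    card_eq_sum_ones {x ∈ s | ¬σ x = x}, Nat.cast_sum, Nat.cast_one, hMoved, add_zero]

theorem Nat.mul_sq_inj {c a b : ℕ} (hc : 0 < c) : c * a ^ 2 = c * b ^ 2 ↔ a = b := by
  simp [hc.ne']

theorem Nat.le_mul_sq {c : ℕ} (hc : 0 < c) (a : ℕ) : a ≤ c * a ^ 2 :=
  (Nat.le_self_pow two_ne_zero a).trans (Nat.le_mul_of_pos_left _ hc)

open Classical in
/-- `Δ(q^c)`. -/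
noncomputable def oddSquareSeries (c : ℕ) : PowerSeries (ZMod 2) :=
  PowerSeries.mk fun n => if ∃ a, Odd a ∧ n = c * a ^ 2 then 1 else 0

theorem Delta_eq_oddSquareSeries : Delta = oddSquareSeries 1 := by
  ext n
  simp only [Delta, oddSquareSeries, coeff_mk]
  congr 1
  exact propext ⟨fun ⟨m, h⟩ => ⟨_, odd_two_mul_add_one m, by rw [h, one_mul]⟩,
    fun ⟨_, ⟨m, hm⟩, h⟩ => ⟨m, by rw [h, hm, one_mul]⟩⟩

theorem DeltaCubedVar_eq_oddSquareSeries : DeltaCubedVar = oddSquareSeries 3 := by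
  ext n
  simp only [DeltaCubedVar, oddSquareSeries, coeff_mk]
  congr 1
  exact propext ⟨fun ⟨m, h⟩ => ⟨_, odd_two_mul_add_one m, h⟩,
    fun ⟨_, ⟨m, hm⟩, h⟩ => ⟨m, hm ▸ h⟩⟩

theorem oddSquareSeries_pow_four (c : ℕ) : oddSquareSeries c ^ 4 = oddSquareSeries (4 * c) := by
  have hExpand : oddSquareSeries c ^ 4 = expand 4 four_ne_zero (oddSquareSeries c) :=
    pow_prime_pow_eq_expand (p := 2) 2 _
  ext n
  rw [hExpand, coeff_expand]
  simp only [oddSquareSeries, coeff_mk]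
  by_cases h4 : 4 ∣ n
  · obtain ⟨k, rfl⟩ := h4
    rw [if_pos (dvd_mul_right 4 k), Nat.mul_div_cancel_left k four_pos]
    congr 1
    exact propext <| exists_congr fun a => and_congr_right fun _ => by
      rw [mul_assoc, Nat.mul_left_cancel_iff four_pos]
  · rw [if_neg h4, if_neg]
    rintro ⟨a, -, rfl⟩
    exact h4 (by rw [mul_assoc]; exact dvd_mul_right _ _)

theorem coeff_oddSquareSeries {c : ℕ} (hc : 0 < c) (n : ℕ) :
    coeff n (oddSquareSeries c) = #{a ∈ range (n + 1) | Odd a ∧ n = c * a ^ 2} := by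
  rw [oddSquareSeries, coeff_mk]
  split_ifs with h
  · obtain ⟨a, ha, rfl⟩ := h
    rw [card_eq_one.2 ⟨a, ?_⟩, Nat.cast_one]
    ext b
    simp only [mem_filter, mem_range, mem_singleton, Nat.mul_sq_inj hc]
    constructor
    · exact fun ⟨_, _, hab⟩ => hab.symm
    · rintro rfl
      exact ⟨Nat.lt_succ_of_le (Nat.le_mul_sq hc b), ha, rfl⟩
  · rw [filter_false_of_mem fun a _ ha => h ⟨a, ha⟩, card_empty, Nat.cast_zero]

def oddReps (c d n : ℕ) : Finset (ℕ × ℕ) :=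
  {p ∈ range (n + 1) ×ˢ range (n + 1) | Odd p.1 ∧ Odd p.2 ∧ c * p.1 ^ 2 + d * p.2 ^ 2 = n}

theorem mem_oddReps {c d n : ℕ} (hc : 0 < c) (hd : 0 < d) {p : ℕ × ℕ} :
    p ∈ oddReps c d n ↔ Odd p.1 ∧ Odd p.2 ∧ c * p.1 ^ 2 + d * p.2 ^ 2 = n := by
  rw [oddReps, mem_filter, mem_product, mem_range, mem_range, and_iff_right_iff_imp]
  rintro ⟨-, -, rfl⟩
  have := Nat.le_mul_sq hc p.1
  have := Nat.le_mul_sq hd p.2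
  omega

theorem coeff_oddSquareSeries_mul {c d : ℕ} (hc : 0 < c) (hd : 0 < d) (n : ℕ) :
    coeff n (oddSquareSeries c * oddSquareSeries d) = #(oddReps c d n) := by
  classical
  simp only [coeff_mul, oddSquareSeries, coeff_mk, ite_zero_mul_ite_zero, mul_one]
  rw [sum_boole]
  congr 1
  symm
  refine card_nbij (fun p => (c * p.1 ^ 2, d * p.2 ^ 2)) (fun p hp => ?_) ?_ ?_
  · obtain ⟨ha, hb, hn⟩ := (mem_oddReps hc hd).1 hp
    exact mem_filter.2 ⟨mem_antidiagonal.2 hn, ⟨_, ha, rfl⟩, ⟨_, hb, rfl⟩⟩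
  · intro p _ q _ hpq
    simp only [Prod.mk.injEq, Nat.mul_sq_inj hc, Nat.mul_sq_inj hd] at hpq
    exact Prod.ext hpq.1 hpq.2
  · rintro ⟨i, j⟩ hij
    obtain ⟨hn, ⟨a, ha, rfl⟩, ⟨b, hb, rfl⟩⟩ := mem_filter.1 hij
    exact ⟨(a, b), (mem_oddReps hc hd).2 ⟨ha, hb, mem_antidiagonal.1 hn⟩, rfl⟩

theorem card_filter_fst_eq_mul_snd_oddReps {c d k : ℕ} (hc : 0 < c) (hd : 0 < d) (hk : Odd k)
    (n : ℕ) :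
    #{p ∈ oddReps c d n | p.1 = k * p.2} =
      #{b ∈ range (n + 1) | Odd b ∧ n = (c * k ^ 2 + d) * b ^ 2} := by
  have hckd : 0 < c * k ^ 2 + d := by positivity
  refine card_nbij' Prod.snd (fun b => (k * b, b)) (fun p hp => ?_) (fun b hb => ?_)
    (fun p hp => ?_) (fun _ _ => rfl)
  · obtain ⟨hp, hpk⟩ := mem_filter.1 hp
    obtain ⟨-, h₂, hn⟩ := (mem_oddReps hc hd).1 hp
    have hn' : n = (c * k ^ 2 + d) * p.2 ^ 2 := by rw [← hn, hpk]; ring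
    exact mem_filter.2 ⟨mem_range.2 (Nat.lt_succ_of_le (hn' ▸ Nat.le_mul_sq hckd _)), h₂, hn'⟩
  · obtain ⟨-, hb, hn⟩ := mem_filter.1 hb
    refine mem_filter.2 ⟨(mem_oddReps hc hd).2 ⟨hk.mul hb, hb, ?_⟩, rfl⟩
    rw [hn]
    ring
  · exact Prod.ext (mem_filter.1 hp).2.symm rfl

/-- `(a, b) ↦ |(a + b√-3) · (1 ± √-3)/2|`, read off in coordinates, with the sign chosen so that
both coordinates stay odd when `a` and `b` are odd. -/
def oddRepInvolution (p : ℕ × ℕ) : ℕ × ℕ :=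
  if (p.1 + p.2) % 4 = 0 then ((p.1 + 3 * p.2) / 2, Nat.dist p.1 p.2 / 2)
  else (Nat.dist p.1 (3 * p.2) / 2, (p.1 + p.2) / 2)

theorem odd_oddRepInvolution {p : ℕ × ℕ} (h₁ : Odd p.1) (h₂ : Odd p.2) :
    Odd (oddRepInvolution p).1 ∧ Odd (oddRepInvolution p).2 := by
  rw [Nat.odd_iff] at h₁ h₂
  simp only [oddRepInvolution, Nat.dist, Nat.odd_iff]
  split_ifs <;> omega

theorem oddRepInvolution_oddRepInvolution {p : ℕ × ℕ} (h₁ : Odd p.1) (h₂ : Odd p.2) :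
    oddRepInvolution (oddRepInvolution p) = p := by
  rw [Nat.odd_iff] at h₁ h₂
  simp only [oddRepInvolution, Nat.dist]
  split_ifs <;> simp only [Prod.ext_iff] <;> omega

theorem oddRepInvolution_eq_self_iff {p : ℕ × ℕ} (h₁ : Odd p.1) (h₂ : Odd p.2) :
    oddRepInvolution p = p ↔ p.1 = p.2 ∨ p.1 = 3 * p.2 := by
  rw [Nat.odd_iff] at h₁ h₂
  simp only [oddRepInvolution, Nat.dist]
  split_ifs <;> simp only [Prod.ext_iff] <;> omega

theorem oddRepInvolution_sq_add_three_mul_sq {p : ℕ × ℕ} (h₁ : Odd p.1) (h₂ : Odd p.2) :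
    (oddRepInvolution p).1 ^ 2 + 3 * (oddRepInvolution p).2 ^ 2 = p.1 ^ 2 + 3 * p.2 ^ 2 := by
  obtain ⟨a, b⟩ := p
  rw [Nat.odd_iff] at h₁ h₂
  unfold oddRepInvolution Nat.dist
  split_ifs
  · generalize hc : (a + 3 * b) / 2 = c
    generalize hd : (a - b + (b - a)) / 2 = d
    have h1 : (2 * c : ℤ) ^ 2 = (a + 3 * b) ^ 2 := by congr 1; omega
    have h2 : (2 * d : ℤ) ^ 2 = (a - b) ^ 2 := sq_eq_sq_iff_eq_or_eq_neg.2 (by omega)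
    zify
    linarith
  · generalize hc : (a - 3 * b + (3 * b - a)) / 2 = c
    generalize hd : (a + b) / 2 = d
    have h1 : (2 * c : ℤ) ^ 2 = (a - 3 * b) ^ 2 := sq_eq_sq_iff_eq_or_eq_neg.2 (by omega)
    have h2 : (2 * d : ℤ) ^ 2 = (a + b) ^ 2 := by congr 1; omega
    zify
    linarith

theorem oddRepInvolution_mem_oddReps {n : ℕ} {p : ℕ × ℕ} (hp : p ∈ oddReps 1 3 n) :
    oddRepInvolution p ∈ oddReps 1 3 n := by
  obtain ⟨h₁, h₂, hn⟩ := (mem_oddReps one_pos three_pos).1 hp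
  rw [mem_oddReps one_pos three_pos, one_mul, oddRepInvolution_sq_add_three_mul_sq h₁ h₂,
    ← one_mul (p.1 ^ 2)]
  exact ⟨(odd_oddRepInvolution h₁ h₂).1, (odd_oddRepInvolution h₁ h₂).2, hn⟩

theorem natCast_card_oddReps_one_three (n : ℕ) :
    (#(oddReps 1 3 n) : ZMod 2) =
      #{a ∈ range (n + 1) | Odd a ∧ n = 4 * a ^ 2} +
        #{a ∈ range (n + 1) | Odd a ∧ n = 12 * a ^ 2} := by
  have hFixed : {p ∈ oddReps 1 3 n | oddRepInvolution p = p} =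
      {p ∈ oddReps 1 3 n | p.1 = 1 * p.2} ∪ {p ∈ oddReps 1 3 n | p.1 = 3 * p.2} := by
    rw [← filter_or]
    refine filter_congr fun p hp => ?_
    obtain ⟨h₁, h₂, -⟩ := (mem_oddReps one_pos three_pos).1 hp
    rw [oddRepInvolution_eq_self_iff h₁ h₂, one_mul]
  have hDisjoint : Disjoint {p ∈ oddReps 1 3 n | p.1 = 1 * p.2}
      {p ∈ oddReps 1 3 n | p.1 = 3 * p.2} := by
    refine disjoint_filter.2 fun p hp h₁ h₃ => ?_
    obtain ⟨-, h₂, -⟩ := (mem_oddReps one_pos three_pos).1 hp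
    exact h₂.pos.ne' (by omega)
  have hInvolutive : ∀ p ∈ oddReps 1 3 n, oddRepInvolution (oddRepInvolution p) = p := by
    intro p hp
    obtain ⟨h₁, h₂, -⟩ := (mem_oddReps one_pos three_pos).1 hp
    exact oddRepInvolution_oddRepInvolution h₁ h₂
  rw [natCast_card_eq_card_filter_isFixedPt _ oddRepInvolution
      (fun _ => oddRepInvolution_mem_oddReps) hInvolutive, hFixed,
    card_union_of_disjoint hDisjoint, Nat.cast_add,
    card_filter_fst_eq_mul_snd_oddReps one_pos three_pos odd_one,
    card_filter_fst_eq_mul_snd_oddReps one_pos three_pos (by decide)]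
  norm_num

theorem modular_equation_three :
    DeltaCubedVar ^ 4 + Delta * DeltaCubedVar + Delta ^ 4 = 0 := by
  rw [Delta_eq_oddSquareSeries, DeltaCubedVar_eq_oddSquareSeries, oddSquareSeries_pow_four,
    oddSquareSeries_pow_four]
  ext n
  rw [map_add, map_add, coeff_oddSquareSeries_mul one_pos three_pos,
    natCast_card_oddReps_one_three, coeff_oddSquareSeries (by norm_num),
    coeff_oddSquareSeries (by norm_num), map_zero]
  norm_num only [mul_one]
  ring_nf
  simp only [CharTwo.two_eq_zero, mul_zero, add_zero]
end
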